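/- Let n ≥ 1 and let m ∈ S(ℝⁿ) be a Schwartz function. For t > 0 and f ∈ L²(ℝⁿ) define T_t f(x) := ∫_{ℝⁿ} m(tξ) f̂(ξ) e^{i x·ξ} dξ, where f̂ is the Fourier–Plancherel transform of f. Then there exists a constant C, depending only on n, such that for all f ∈ L²(ℝⁿ) and all x ∈ ℝⁿ, sup_{t > 0} |T_t f(x)| ≤ C (‖m‖_{L¹(ℝⁿ)} + ∑_{|β| = n+1} ‖∂^β m‖_{L¹(ℝⁿ)}) · Mf(x), where the sum is over all multi-indices β of order n+1. -/

import Mathlib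

/-!
Write `T_t f(x) = ∫ F g` with `g(ξ) = m(tξ) e^{i⟨x,ξ⟩}`, a Schwartz function; the multiplication
formula turns this into `∫ f ĝ`, and `ĝ(y) = t^{-n} m̂((y - x)/t)`. Since
`|w_j|^{n+1} |m̂(w)| = |(∂_j^{n+1} m)^(w)| ≤ ‖∂_j^{n+1} m‖_{L¹}`, the kernel `m̂` decays like
`A(m) (1 + |w|)^{-(n+1)}`, where `A(m)` is the norm on the right-hand side. Cover `ℝⁿ` by the balls
`B(x, 2^{k+1} t)` cut down to where the dilated kernel is at most `2^{-k(n+1)} t^{-n}`: the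
integral of `|f|` against the kernel is then at most `∑_k 2^{n-k} |B(0,1)| Mf(x)`.
-/

open MeasureTheory Metric Finset
open scoped ENNReal NNReal SchwartzMap

/-- The Fourier transform `f̂(ξ) = ∫ f(x) e^{-i x·ξ} dx`. -/
noncomputable def FT {n : ℕ} (f : EuclideanSpace ℝ (Fin n) → ℂ)
    (ξ : EuclideanSpace ℝ (Fin n)) : ℂ :=
  ∫ x, Complex.exp (-(Complex.I * ((inner ℝ x ξ : ℝ) : ℂ))) * f x

/-- The (uncentered) Hardy–Littlewood maximal function, with values in `[0,∞]`. -/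
noncomputable def maxFn {n : ℕ} (f : EuclideanSpace ℝ (Fin n) → ℂ)
    (x : EuclideanSpace ℝ (Fin n)) : ℝ≥0∞ :=
  ⨆ (z : EuclideanSpace ℝ (Fin n)) (r : ℝ) (_ : 0 < r) (_ : x ∈ ball z r),
    ⨍⁻ y in ball z r, (‖f y‖₊ : ℝ≥0∞) ∂volume

/-- The partial derivative in the `i`-th coordinate direction. -/
noncomputable def pderivI {n : ℕ} (i : Fin n) (f : EuclideanSpace ℝ (Fin n) → ℂ) :
    EuclideanSpace ℝ (Fin n) → ℂ :=
  fun x => fderiv ℝ f x (EuclideanSpace.single i 1)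

/-- The multi-index partial derivative `∂^β`. -/
noncomputable def pderivMulti {n : ℕ} (β : Fin n → ℕ)
    (f : EuclideanSpace ℝ (Fin n) → ℂ) : EuclideanSpace ℝ (Fin n) → ℂ :=
  (List.finRange n).foldr (fun i g => (pderivI i)^[β i] g) f

open Complex Real
open scoped FourierTransform LineDeriv

section

variable {n : ℕ}

local notation "ℝⁿ" => EuclideanSpace ℝ (Fin n)

theorem FT_eq_fourier (f : ℝⁿ → ℂ) (ξ : ℝⁿ) :
    FT f ξ = 𝓕 f ((2 * π)⁻¹ • ξ) := by
  rw [Real.fourier_eq', FT]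
  congr 1 with v
  rw [real_inner_smul_right, smul_eq_mul]
  congr 2
  push_cast
  field_simp

theorem norm_FT_le_integral_norm (f : ℝⁿ → ℂ) (ξ : ℝⁿ) :
    ‖FT f ξ‖ ≤ ∫ y, ‖f y‖ :=
  (norm_integral_le_integral_norm _).trans_eq <| by
    simp [Complex.norm_exp]

theorem pderivI_eq_lineDerivOp (h : 𝓢(ℝⁿ, ℂ)) (j : Fin n) :
    pderivI j h = ⇑(∂_{EuclideanSpace.single j (1 : ℝ)} h : 𝓢(ℝⁿ, ℂ)) :=
  rfl

theorem FT_pderivI (h : 𝓢(ℝⁿ, ℂ)) (j : Fin n) (ξ : ℝⁿ) :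
    FT (pderivI j h) ξ = I * ξ j * FT h ξ := by
  rw [pderivI_eq_lineDerivOp, FT_eq_fourier, FT_eq_fourier, ← SchwartzMap.fourier_coe,
    SchwartzMap.fourier_lineDerivOp_eq, smul_apply, SchwartzMap.smulLeftCLM_apply_apply
    (Function.hasTemperateGrowth_inner_left _), real_inner_smul_left,
    EuclideanSpace.inner_single_right, SchwartzMap.fourier_coe]
  simp only [conj_trivial, smul_eq_mul, Complex.real_smul]
  push_cast
  field_simp

theorem norm_FT_iterate_pderivI (h : 𝓢(ℝⁿ, ℂ)) (j : Fin n) (k : ℕ)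
    (ξ : ℝⁿ) :
    ‖FT ((pderivI j)^[k] h) ξ‖ = |ξ j| ^ k * ‖FT h ξ‖ := by
  induction k generalizing h with
  | zero => simp
  | succ k ih =>
    rw [Function.iterate_succ_apply, pderivI_eq_lineDerivOp, ih, ← pderivI_eq_lineDerivOp,
      FT_pderivI]
    simp [pow_succ]; ring

theorem EuclideanSpace.norm_le_sum_abs {ι : Type*} [Fintype ι] (x : EuclideanSpace ℝ ι) :
    ‖x‖ ≤ ∑ i, |x i| := by
  refine (pow_le_pow_iff_left₀ (norm_nonneg x) (by positivity) two_ne_zero).mp ?_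
  rw [EuclideanSpace.norm_sq_eq]
  simpa using sum_sq_le_sq_sum_of_nonneg (s := univ) (fun i _ => abs_nonneg (x i))

theorem norm_pow_succ_le_card_pow_mul_sum (ξ : ℝⁿ) (k : ℕ) :
    ‖ξ‖ ^ (k + 1) ≤ (n : ℝ) ^ k * ∑ j, |ξ j| ^ (k + 1) :=
  calc ‖ξ‖ ^ (k + 1) ≤ (∑ j, |ξ j|) ^ (k + 1) := by
        gcongr; exact EuclideanSpace.norm_le_sum_abs ξ
    _ ≤ (n : ℝ) ^ k * ∑ j, |ξ j| ^ (k + 1) := by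
        simpa using pow_sum_le_card_mul_sum_pow (s := univ) (fun j _ => abs_nonneg (ξ j)) k

theorem norm_pow_succ_mul_norm_FT_le (h : 𝓢(ℝⁿ, ℂ)) (k : ℕ)
    (ξ : ℝⁿ) :
    ‖ξ‖ ^ (k + 1) * ‖FT h ξ‖ ≤ (n : ℝ) ^ k * ∑ j, ∫ y, ‖(pderivI j)^[k + 1] h y‖ :=
  calc ‖ξ‖ ^ (k + 1) * ‖FT h ξ‖ ≤ ((n : ℝ) ^ k * ∑ j, |ξ j| ^ (k + 1)) * ‖FT h ξ‖ := by
        gcongr; exact norm_pow_succ_le_card_pow_mul_sum ξ k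
    _ = (n : ℝ) ^ k * ∑ j, ‖FT ((pderivI j)^[k + 1] h) ξ‖ := by
        simp only [norm_FT_iterate_pderivI, mul_assoc, sum_mul]
    _ ≤ (n : ℝ) ^ k * ∑ j, ∫ y, ‖(pderivI j)^[k + 1] h y‖ := by
        gcongr; exact norm_FT_le_integral_norm _ _

theorem foldr_iterate_pderivI_single (j : Fin n) (k : ℕ) (f : ℝⁿ → ℂ)
    (l : List (Fin n)) :
    l.foldr (fun i g => (pderivI i)^[(Pi.single j k : Fin n → ℕ) i] g) f =
      (pderivI j)^[l.count j * k] f := by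
  induction l with
  | nil => simp
  | cons i l ih =>
    rw [List.foldr_cons, ih, List.count_cons]
    by_cases hij : i = j
    · subst hij
      simp [← Function.iterate_add_apply, add_mul, add_comm]
    · simp [hij]

theorem pderivMulti_single (j : Fin n) (k : ℕ) (f : ℝⁿ → ℂ) :
    pderivMulti (Pi.single j k) f = (pderivI j)^[k] f := by
  rw [pderivMulti, foldr_iterate_pderivI_single, List.count_finRange, one_mul]

noncomputable def multiplierNorm (m : ℝⁿ → ℂ) : ℝ :=
  (∫ y, ‖m y‖) +
    ∑ β ∈ univ.filter (fun β : Fin n → Fin (n + 2) => (∑ i, (β i : ℕ)) = n + 1),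
      ∫ y, ‖pderivMulti (fun i => (β i : ℕ)) m y‖

theorem integral_norm_le_multiplierNorm (m : ℝⁿ → ℂ) :
    ∫ y, ‖m y‖ ≤ multiplierNorm m :=
  le_add_of_nonneg_right <| sum_nonneg fun _ _ => integral_nonneg fun _ => norm_nonneg _

theorem multiplierNorm_nonneg (m : ℝⁿ → ℂ) : 0 ≤ multiplierNorm m :=
  (integral_nonneg fun _ => norm_nonneg _).trans (integral_norm_le_multiplierNorm m)

theorem sum_integral_iterate_pderivI_le_multiplierNorm (m : ℝⁿ → ℂ) :
    ∑ j, ∫ y, ‖(pderivI j)^[n + 1] m y‖ ≤ multiplierNorm m := by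
  let β : Fin n → Fin n → Fin (n + 2) := fun j => Pi.single j (Fin.last (n + 1))
  have hβ : ∀ j, (fun i => (β j i : ℕ)) = Pi.single j (n + 1) := by
    intro j; ext i
    by_cases hij : i = j
    · subst hij; simp [β]
    · simp [β, hij]
  have hβ_inj : Function.Injective β := fun i j hij => by
    by_contra hne
    simpa [β, hne] using congrFun hij i
  calc ∑ j, ∫ y, ‖(pderivI j)^[n + 1] m y‖
      = ∑ b ∈ univ.image β, ∫ y, ‖pderivMulti (fun i => (b i : ℕ)) m y‖ := by
        rw [sum_image fun i _ j _ hij => hβ_inj hij]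
        simp [hβ, pderivMulti_single]
    _ ≤ ∑ b ∈ univ.filter (fun β : Fin n → Fin (n + 2) => (∑ i, (β i : ℕ)) = n + 1),
          ∫ y, ‖pderivMulti (fun i => (b i : ℕ)) m y‖ := by
        refine sum_le_sum_of_subset_of_nonneg ?_ fun _ _ _ => integral_nonneg fun _ => norm_nonneg _
        intro b hb
        obtain ⟨j, -, rfl⟩ := mem_image.mp hb
        simp [hβ]
    _ ≤ multiplierNorm m := le_add_of_nonneg_left (integral_nonneg fun _ => norm_nonneg _)

theorem norm_FT_mul_one_add_norm_pow_le (h : 𝓢(ℝⁿ, ℂ))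
    (ξ : ℝⁿ) :
    ‖FT h ξ‖ * (1 + ‖ξ‖) ^ (n + 1) ≤ 2 ^ n * (1 + (n : ℝ) ^ n) * multiplierNorm h := by
  have hFT : ‖FT h ξ‖ ≤ multiplierNorm h :=
    (norm_FT_le_integral_norm h ξ).trans (integral_norm_le_multiplierNorm h)
  have hξ : ‖ξ‖ ^ (n + 1) * ‖FT h ξ‖ ≤ (n : ℝ) ^ n * multiplierNorm h :=
    (norm_pow_succ_mul_norm_FT_le h n ξ).trans <| by
      gcongr; exact sum_integral_iterate_pderivI_le_multiplierNorm h
  calc ‖FT h ξ‖ * (1 + ‖ξ‖) ^ (n + 1) ≤ ‖FT h ξ‖ * (2 ^ n * (1 + ‖ξ‖ ^ (n + 1))) := by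
        gcongr; simpa using add_pow_le zero_le_one (norm_nonneg ξ) (n + 1)
    _ = 2 ^ n * (‖FT h ξ‖ + ‖ξ‖ ^ (n + 1) * ‖FT h ξ‖) := by ring
    _ ≤ 2 ^ n * (1 + (n : ℝ) ^ n) * multiplierNorm h := by nlinarith [pow_pos (two_pos (α := ℝ)) n]

theorem FT_mul_exp_inner (f : ℝⁿ → ℂ) (x y : ℝⁿ) :
    FT (fun ξ => f ξ * exp (I * (inner ℝ x ξ : ℝ))) y = FT f (y - x) := by
  simp only [FT]
  congr 1 with ξ
  rw [mul_comm (f ξ), ← mul_assoc, ← Complex.exp_add, inner_sub_right, real_inner_comm x ξ]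
  push_cast
  ring_nf

theorem FT_comp_smul (f : ℝⁿ → ℂ) {t : ℝ} (ht : 0 < t)
    (y : ℝⁿ) :
    FT (fun ξ => f (t • ξ)) y = (t ^ n)⁻¹ • FT f (t⁻¹ • y) := by
  have h := Measure.integral_comp_smul_of_nonneg volume
    (fun ξ => exp (-(I * (inner ℝ ξ (t⁻¹ • y) : ℝ))) * f ξ) t (hR := ht.le)
  rw [finrank_euclideanSpace_fin] at h
  rw [FT, FT, ← h]
  congr 1 with ξ
  rw [real_inner_smul_left, real_inner_smul_right, ← mul_assoc, mul_inv_cancel₀ ht.ne', one_mul]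

theorem hasTemperateGrowth_exp_I_mul :
    Function.HasTemperateGrowth (fun s : ℝ => exp (I * s)) := by
  have hderiv : ∀ k, iteratedDeriv k (fun s : ℝ => exp (I * s)) =
      fun s : ℝ => I ^ k * exp (I * s) := by
    intro k
    induction k with
    | zero => simp
    | succ k ih =>
      ext s
      rw [iteratedDeriv_succ, ih]
      have : HasDerivAt (fun s : ℝ => exp (I * s)) (exp (I * s) * I) s := by
        simpa using ((hasDerivAt_id (s : ℂ)).const_mul I).cexp.comp_ofReal
      rw [(this.const_mul (I ^ k)).deriv]
      ring
  refine ⟨(contDiff_const.mul ofRealCLM.contDiff).cexp, fun k => ⟨0, 1, fun s => ?_⟩⟩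
  rw [norm_iteratedFDeriv_eq_norm_iteratedDeriv, hderiv]
  simp [norm_exp]

theorem exists_schwartzMap_eq_comp_smul_mul_exp (m : 𝓢(ℝⁿ, ℂ)) {t : ℝ}
    (ht : t ≠ 0) (x : ℝⁿ) :
    ∃ g : 𝓢(ℝⁿ, ℂ), ∀ ξ, g ξ = m (t • ξ) * exp (I * (inner ℝ x ξ : ℝ)) := by
  have hexp : Function.HasTemperateGrowth fun ξ : ℝⁿ =>
      exp (I * (inner ℝ x ξ : ℝ)) :=
    hasTemperateGrowth_exp_I_mul.comp (Function.hasTemperateGrowth_inner_right x)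
  refine ⟨SchwartzMap.smulLeftCLM ℂ (fun ξ : ℝⁿ =>
      exp (I * (inner ℝ x ξ : ℝ))) (SchwartzMap.compCLMOfContinuousLinearEquiv ℂ
    (ContinuousLinearEquiv.smulLeft (Units.mk0 t ht)) m), fun ξ => ?_⟩
  rw [SchwartzMap.smulLeftCLM_apply_apply hexp, smul_eq_mul, mul_comm]
  rfl

noncomputable def decayKernel (t : ℝ) (z : ℝⁿ) : ℝ :=
  (t ^ n)⁻¹ * ((1 + ‖z‖ / t) ^ (n + 1))⁻¹

theorem norm_FT_comp_smul_mul_exp_le (m : 𝓢(ℝⁿ, ℂ)) {t : ℝ} (ht : 0 < t)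
    (x y : ℝⁿ) :
    ‖FT (fun ξ => m (t • ξ) * exp (I * (inner ℝ x ξ : ℝ))) y‖ ≤
      2 ^ n * (1 + (n : ℝ) ^ n) * multiplierNorm m * decayKernel t (y - x) := by
  have hw : ‖t⁻¹ • (y - x)‖ = ‖y - x‖ / t := by
    rw [norm_smul, norm_inv, Real.norm_of_nonneg ht.le, inv_mul_eq_div]
  have hdecay := norm_FT_mul_one_add_norm_pow_le m (t⁻¹ • (y - x))
  rw [hw, ← le_div_iff₀ (by positivity)] at hdecay
  rw [FT_mul_exp_inner (fun ξ => m (t • ξ)), FT_comp_smul _ ht, norm_smul, norm_inv,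
    norm_pow, Real.norm_of_nonneg ht.le, decayKernel]
  calc (t ^ n)⁻¹ * ‖FT m (t⁻¹ • (y - x))‖
      ≤ (t ^ n)⁻¹ * (2 ^ n * (1 + (n : ℝ) ^ n) * multiplierNorm m /
          (1 + ‖y - x‖ / t) ^ (n + 1)) := by
        gcongr
    _ = _ := by ring

theorem setLIntegral_ball_le_maxFn (f : ℝⁿ → ℂ) (x : ℝⁿ)
    {R : ℝ} (hR : 0 < R) :
    ∫⁻ y in ball x R, ‖f y‖ₑ ≤ volume (ball x R) * maxFn f x := by
  have havg : (⨍⁻ y in ball x R, ‖f y‖ₑ ∂volume) ≤ maxFn f x :=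
    le_iSup_of_le x <| le_iSup_of_le R <| le_iSup_of_le hR <|
      le_iSup_of_le (mem_ball_self hR) le_rfl
  rw [← measure_mul_setLAverage _ measure_ball_lt_top.ne]
  gcongr

theorem exists_decayKernel_le {t : ℝ} (ht : 0 < t) (z : ℝⁿ) :
    ∃ k : ℕ, ‖z‖ < 2 ^ (k + 1) * t ∧ decayKernel t z ≤ ((2 ^ k) ^ (n + 1))⁻¹ * (t ^ n)⁻¹ := by
  obtain ⟨k, hk, hk'⟩ := exists_nat_pow_near (le_add_of_nonneg_right (by positivity : 0 ≤ ‖z‖ / t))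
    one_lt_two
  refine ⟨k, ?_, ?_⟩
  · rw [← div_lt_iff₀ ht]
    linarith
  · rw [decayKernel, mul_comm]
    gcongr

theorem lintegral_mul_decayKernel_le (f : ℝⁿ → ℂ) {t : ℝ} (ht : 0 < t)
    (x : ℝⁿ) :
    ∫⁻ y, ‖f y‖ₑ * ENNReal.ofReal (decayKernel t (y - x)) ≤
      2 ^ (n + 1) * volume (ball (0 : ℝⁿ) 1) * maxFn f x := by
  set c : ℕ → ℝ := fun k => ((2 ^ k) ^ (n + 1))⁻¹ * (t ^ n)⁻¹
  set S : ℕ → Set (ℝⁿ) :=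
    fun k => ball x (2 ^ (k + 1) * t) ∩ {y | decayKernel t (y - x) ≤ c k}
  have hcover : ⋃ k, S k = Set.univ := Set.eq_univ_of_forall fun y => by
    obtain ⟨k, hk, hk'⟩ := exists_decayKernel_le ht (y - x)
    exact Set.mem_iUnion.2 ⟨k, by rwa [mem_ball, dist_eq_norm], hk'⟩
  have hscale : ∀ k : ℕ, ENNReal.ofReal (c k) * ENNReal.ofReal ((2 ^ (k + 1) * t) ^ n) =
      2 ^ n * 2⁻¹ ^ k := by
    intro k
    rw [← ENNReal.ofReal_mul (by positivity)]
    have : c k * (2 ^ (k + 1) * t) ^ n = 2 ^ n * 2⁻¹ ^ k := by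
      simp only [c, inv_pow]
      field_simp
      ring
    rw [this, ENNReal.ofReal_mul (by positivity), ENNReal.ofReal_pow (by positivity),
      ENNReal.ofReal_pow (by positivity), ENNReal.ofReal_inv_of_pos two_pos]
    norm_num
  have hS : ∀ k, ∫⁻ y in S k, ‖f y‖ₑ * ENNReal.ofReal (decayKernel t (y - x)) ≤
      2 ^ n * 2⁻¹ ^ k * (volume (ball (0 : ℝⁿ) 1) * maxFn f x) := by
    intro k
    have hSk : MeasurableSet (S k) :=
      measurableSet_ball.inter (measurableSet_le (by unfold decayKernel; fun_prop) measurable_const)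
    calc ∫⁻ y in S k, ‖f y‖ₑ * ENNReal.ofReal (decayKernel t (y - x))
        ≤ ∫⁻ y in S k, ENNReal.ofReal (c k) * ‖f y‖ₑ :=
          setLIntegral_mono' hSk fun y hy => by
            rw [mul_comm]; gcongr; exact hy.2
      _ = ENNReal.ofReal (c k) * ∫⁻ y in S k, ‖f y‖ₑ :=
          lintegral_const_mul' _ _ ENNReal.ofReal_ne_top
      _ ≤ ENNReal.ofReal (c k) * (volume (ball x (2 ^ (k + 1) * t)) * maxFn f x) := by
          gcongr
          exact (lintegral_mono_set Set.inter_subset_left).trans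
            (setLIntegral_ball_le_maxFn f x (by positivity))
      _ = 2 ^ n * 2⁻¹ ^ k * (volume (ball (0 : ℝⁿ) 1) * maxFn f x) := by
          rw [Measure.addHaar_ball_of_pos _ _ (by positivity), finrank_euclideanSpace_fin,
            ← hscale]
          ring
  calc ∫⁻ y, ‖f y‖ₑ * ENNReal.ofReal (decayKernel t (y - x))
      = ∫⁻ y in ⋃ k, S k, ‖f y‖ₑ * ENNReal.ofReal (decayKernel t (y - x)) := by
        rw [hcover, setLIntegral_univ]
    _ ≤ ∑' k, ∫⁻ y in S k, ‖f y‖ₑ * ENNReal.ofReal (decayKernel t (y - x)) :=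
        lintegral_iUnion_le _ _
    _ ≤ ∑' k : ℕ, 2 ^ n * 2⁻¹ ^ k * (volume (ball (0 : ℝⁿ) 1) * maxFn f x) :=
        ENNReal.tsum_le_tsum hS
    _ = 2 ^ (n + 1) * volume (ball (0 : ℝⁿ) 1) * maxFn f x := by
        rw [ENNReal.tsum_mul_right, ENNReal.tsum_mul_left, ENNReal.tsum_geometric,
          ENNReal.one_sub_inv_two, inv_inv]
        ring

end

theorem stmt5_general (n : ℕ) :
    ∃ C : ℝ≥0∞, C ≠ ⊤ ∧
      ∀ m : 𝓢(EuclideanSpace ℝ (Fin n), ℂ),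
      ∀ f F : EuclideanSpace ℝ (Fin n) → ℂ,
        MemLp f 2 volume → MemLp F 2 volume →
        (∀ g : 𝓢(EuclideanSpace ℝ (Fin n), ℂ), ∫ ξ, F ξ * g ξ = ∫ x, f x * FT (⇑g) x) →
        ∀ x : EuclideanSpace ℝ (Fin n), ∀ t : ℝ, 0 < t →
          (‖∫ ξ, m (t • ξ) * F ξ * Complex.exp (Complex.I * ((inner ℝ x ξ : ℝ) : ℂ))‖₊ : ℝ≥0∞) ≤
            C * ENNReal.ofReal
                ((∫ y, ‖m y‖) +
                  ∑ β ∈ Finset.univ.filter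
                      (fun β : Fin n → Fin (n + 2) => (∑ i, (β i : ℕ)) = n + 1),
                    ∫ y, ‖pderivMulti (fun i => (β i : ℕ)) (⇑m) y‖) *
              maxFn f x := by
  set D : ℝ := 2 ^ n * (1 + (n : ℝ) ^ n)
  refine ⟨ENNReal.ofReal D * (2 ^ (n + 1) * volume (ball (0 : EuclideanSpace ℝ (Fin n)) 1)),
    ENNReal.mul_ne_top ENNReal.ofReal_ne_top (ENNReal.mul_ne_top (by simp) measure_ball_lt_top.ne),
    fun m f F _ _ hF x t ht => ?_⟩
  obtain ⟨g, hg⟩ := exists_schwartzMap_eq_comp_smul_mul_exp m ht.ne' x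
  have hTf : ∫ ξ, m (t • ξ) * F ξ * exp (I * (inner ℝ x ξ : ℝ)) = ∫ y, f y * FT g y := by
    rw [← hF g]
    congr 1 with ξ
    rw [hg]
    ring
  have hkernel : ∀ y, ‖FT g y‖ₑ ≤
      ENNReal.ofReal (D * multiplierNorm m) * ENNReal.ofReal (decayKernel t (y - x)) := fun y => by
    rw [← ENNReal.ofReal_mul (mul_nonneg (by positivity) (multiplierNorm_nonneg m)),
      ← ofReal_norm, show ⇑g = _ from funext hg]
    exact ENNReal.ofReal_le_ofReal (norm_FT_comp_smul_mul_exp_le m ht x y)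
  calc ‖∫ ξ, m (t • ξ) * F ξ * exp (I * (inner ℝ x ξ : ℝ))‖ₑ
      ≤ ∫⁻ y, ‖f y‖ₑ * ‖FT g y‖ₑ := by
        rw [hTf]
        exact (enorm_integral_le_lintegral_enorm _).trans_eq (by simp only [enorm_mul])
    _ ≤ ∫⁻ y, ENNReal.ofReal (D * multiplierNorm m) *
          (‖f y‖ₑ * ENNReal.ofReal (decayKernel t (y - x))) :=
        lintegral_mono fun y => by rw [mul_left_comm]; gcongr; exact hkernel y
    _ = ENNReal.ofReal (D * multiplierNorm m) *
          ∫⁻ y, ‖f y‖ₑ * ENNReal.ofReal (decayKernel t (y - x)) :=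
        lintegral_const_mul' _ _ ENNReal.ofReal_ne_top
    _ ≤ ENNReal.ofReal (D * multiplierNorm m) *
          (2 ^ (n + 1) * volume (ball (0 : EuclideanSpace ℝ (Fin n)) 1) * maxFn f x) := by
        gcongr; exact lintegral_mul_decayKernel_le f ht x
    _ = _ := by
        rw [ENNReal.ofReal_mul (by positivity), multiplierNorm]
        ring

/-- Let `m` be a Schwartz function on `ℝⁿ`, `n ≥ 1`.  For `t > 0` and `f ∈ L²` let
`T_t f(x) := ∫ m(tξ) f̂(ξ) e^{i x·ξ} dξ`, where `f̂` is the Fourier–Plancherel transform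
of `f` (characterized among `L²` functions by the multiplication formula
`∫ f̂ g = ∫ f ĝ` for all Schwartz `g`).  Then there is a constant `C`, depending only
on `n`, such that `sup_{t>0} |T_t f(x)| ≤ C (‖m‖_{L¹} + ∑_{|β|=n+1} ‖∂^β m‖_{L¹}) Mf(x)`. -/
theorem stmt5 (n : ℕ) (hn : 1 ≤ n) :
    ∃ C : ℝ≥0∞, C ≠ ⊤ ∧
      ∀ m : 𝓢(EuclideanSpace ℝ (Fin n), ℂ),
      ∀ f F : EuclideanSpace ℝ (Fin n) → ℂ,
        MemLp f 2 volume → MemLp F 2 volume →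
        (∀ g : 𝓢(EuclideanSpace ℝ (Fin n), ℂ), ∫ ξ, F ξ * g ξ = ∫ x, f x * FT (⇑g) x) →
        ∀ x : EuclideanSpace ℝ (Fin n), ∀ t : ℝ, 0 < t →
          (‖∫ ξ, m (t • ξ) * F ξ * Complex.exp (Complex.I * ((inner ℝ x ξ : ℝ) : ℂ))‖₊ : ℝ≥0∞) ≤
            C * ENNReal.ofReal
                ((∫ y, ‖m y‖) +
                  ∑ β ∈ Finset.univ.filter
                      (fun β : Fin n → Fin (n + 2) => (∑ i, (β i : ℕ)) = n + 1),
                    ∫ y, ‖pderivMulti (fun i => (β i : ℕ)) (⇑m) y‖) *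
              maxFn f x :=
  stmt5_general n
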